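/- The bilinear form φ(x,y)=ε₋(ρ⁺(x)(y)) is a skew-Hopf pairing of the Hopf algebras ̂'𝔣⁺ and ̂'𝔣⁻; that is, for all x,x',x''∈ ̂'𝔣⁺ and y,y',y''∈ ̂'𝔣⁻: φ(1,y)=ε₋(y), φ(x,1)=ε₊(x), φ(x,y'y'')=φ(Δ₊(x),y'⊗y''), φ(x'x'',y)=φ(x'⊗x'',Δ₋^{op}(y)), and φ(S₊(x),y)=φ(x,S₋^{−1}(y)). -/

import Mathlib

open scoped TensorProduct

noncomputable section

/-- A Cartan datum on `I`. -/
structure CartanDatum (I : Type) where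
  c : I → I → ℤ
  symm : ∀ i j, c i j = c j i
  pos : ∀ i, 0 < c i i
  even : ∀ i, Even (c i i)
  dvd : ∀ i j, i ≠ j → c i i ∣ 2 * c i j
  nonpos : ∀ i j, i ≠ j → 2 * c i j ≤ 0

namespace CartanDatum

variable {I : Type} (cd : CartanDatum I)

/-- `d i = (i·i)/2`. -/
def d (i : I) : ℤ := cd.c i i / 2

/-- `a i j = 2(i·j)/(i·i)`. -/
def a (i j : I) : ℤ := 2 * cd.c i j / cd.c i i

/-- Extension of the pairing to `ℕ[I] × ℕ[I]`. -/
def dotN (ν μ : I →₀ ℕ) : ℤ :=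
  ν.sum fun i m => μ.sum fun j n => (m : ℤ) * (n : ℤ) * cd.c i j

end CartanDatum

/-- A multiplicative bilinear form `ℕ[I] × ℕ[I] → 𝔽`. -/
structure MultForm (I 𝔽 : Type) [Field 𝔽] where
  f : (I →₀ ℕ) → (I →₀ ℕ) → 𝔽
  add_left : ∀ ν ν' μ, f (ν + ν') μ = f ν μ * f ν' μ
  add_right : ∀ μ ν ν', f μ (ν + ν') = f μ ν * f μ ν'
  ne_zero : ∀ ν μ, f ν μ ≠ 0

/-- The trivial multiplicative bilinear form, constantly `1`. -/
def trivMF (I 𝔽 : Type) [Field 𝔽] : MultForm I 𝔽 :=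
  ⟨fun _ _ => 1, fun _ _ _ => by ring, fun _ _ _ => by ring, fun _ _ => one_ne_zero⟩

variable {I : Type}

/-- The generator `i` of `ℕ[I]`. -/
def δN (i : I) : I →₀ ℕ := Finsupp.single i 1

/-- The model for the free algebra `'𝔣` on the `θ i`. -/
abbrev FA (𝔽 I : Type) [Field 𝔽] := MonoidAlgebra 𝔽 (FreeMonoid I)

/-- The generator `θ i` of `'𝔣`. -/
def θ (𝔽 : Type) [Field 𝔽] {I : Type} (i : I) : FA 𝔽 I :=
  MonoidAlgebra.of 𝔽 (FreeMonoid I) (FreeMonoid.of i)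

/-- The `ℕ[I]`-degree of a word. -/
def wt [DecidableEq I] (w : FreeMonoid I) : I →₀ ℕ :=
  Multiset.toFinsupp (↑(FreeMonoid.toList w))

/-- Homogeneity of degree `ν` in `'𝔣`. -/
def IsHomog {𝔽 : Type} [Field 𝔽] [DecidableEq I] (ν : I →₀ ℕ) (x : FA 𝔽 I) : Prop :=
  ∀ w ∈ Finsupp.support (x.coeff : FreeMonoid I →₀ 𝔽), wt w = ν

/-- The model for `'𝔣 ⊗ '𝔣` (basis: pairs of words). -/
abbrev TA (𝔽 I : Type) [Field 𝔽] := MonoidAlgebra 𝔽 (FreeMonoid I × FreeMonoid I)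

/-- The tensor `x ⊗ y` in the model of `'𝔣 ⊗ '𝔣`. -/
def tmul {𝔽 : Type} [Field 𝔽] (x y : FA 𝔽 I) : TA 𝔽 I :=
  Finsupp.sum (x.coeff : FreeMonoid I →₀ 𝔽) fun w a =>
    Finsupp.sum (y.coeff : FreeMonoid I →₀ 𝔽) fun u b =>
      MonoidAlgebra.ofCoeff (Finsupp.single (w, u) (a * b) : (FreeMonoid I × FreeMonoid I) →₀ 𝔽)

/-- The twisted multiplication on `'𝔣 ⊗ '𝔣`:
`(x₁⊗x₂)(y₁⊗y₂) = v^{-|y₁|·|x₂|} β(|x₂|,|y₁|) x₁y₁ ⊗ x₂y₂`. -/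
def tMul [DecidableEq I] {𝔽 : Type} [Field 𝔽] (cd : CartanDatum I) (v : 𝔽)
    (β : MultForm I 𝔽) (z z' : TA 𝔽 I) : TA 𝔽 I :=
  Finsupp.sum (z.coeff : (FreeMonoid I × FreeMonoid I) →₀ 𝔽) fun p a =>
    Finsupp.sum (z'.coeff : (FreeMonoid I × FreeMonoid I) →₀ 𝔽) fun q b =>
      MonoidAlgebra.ofCoeff (Finsupp.single (p.1 * q.1, p.2 * q.2)
        (a * b * v ^ (-(cd.dotN (wt q.1) (wt p.2))) * β.f (wt p.2) (wt q.1))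
        : (FreeMonoid I × FreeMonoid I) →₀ 𝔽)

/-- The bilinear form on `'𝔣 ⊗ '𝔣` induced by a form `B` on `'𝔣`:
`(x₁⊗x₂, y₁⊗y₂) = α(|x₁|,|x₂|) (x₁,y₁) (x₂,y₂)` for homogeneous `x₁, x₂`. -/
def pairT [DecidableEq I] {𝔽 : Type} [Field 𝔽] (α : MultForm I 𝔽)
    (B : FA 𝔽 I →ₗ[𝔽] FA 𝔽 I →ₗ[𝔽] 𝔽) (z z' : TA 𝔽 I) : 𝔽 :=
  Finsupp.sum (z.coeff : (FreeMonoid I × FreeMonoid I) →₀ 𝔽) fun p a =>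
    Finsupp.sum (z'.coeff : (FreeMonoid I × FreeMonoid I) →₀ 𝔽) fun q b =>
      a * b * α.f (wt p.1) (wt p.2)
        * B (MonoidAlgebra.single p.1 1) (MonoidAlgebra.single q.1 1)
        * B (MonoidAlgebra.single p.2 1) (MonoidAlgebra.single q.2 1)

/-- The quantum integer `[n]_c`. -/
def qnum {𝔽 : Type} [Field 𝔽] (c : 𝔽) (n : ℕ) : 𝔽 :=
  (c ^ (n : ℤ) - c ^ (-(n : ℤ))) / (c - c⁻¹)

/-- The quantum factorial `[n]_c!`. -/
def qfact {𝔽 : Type} [Field 𝔽] (c : 𝔽) (n : ℕ) : 𝔽 :=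
  ∏ k ∈ Finset.range n, qnum c (k + 1)

/-- The divided power `θ_i^{(n)} = θ_i^n / [n]_{v_i}!`. -/
def θdiv [DecidableEq I] {𝔽 : Type} [Field 𝔽] (cd : CartanDatum I) (v : 𝔽)
    (i : I) (n : ℕ) : FA 𝔽 I :=
  (qfact (v ^ cd.d i) n)⁻¹ • (θ 𝔽 i) ^ n

/-- The twisted quantum Serre element
`D_{ij} = Σ_{k+k'=1-a_{ij}} (-1)^k β(i,j)^{-k} θ_i^{(k)} θ_j θ_i^{(k')}`. -/
def Dij [DecidableEq I] {𝔽 : Type} [Field 𝔽] (cd : CartanDatum I) (v : 𝔽)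
    (g : I → I → 𝔽) (i j : I) : FA 𝔽 I :=
  ∑ k ∈ Finset.range ((1 - cd.a i j).toNat + 1),
    ((-1 : 𝔽) ^ k * ((g i j)⁻¹) ^ k) •
      (θdiv cd v i k * θ 𝔽 j * θdiv cd v i ((1 - cd.a i j).toNat - k))

end
noncomputable section

variable {I : Type}

/-- The generator `i` of `ℤ[I]`. -/
def δZ (i : I) : I →₀ ℤ := Finsupp.single i 1

/-- The inclusion `ℕ[I] → ℤ[I]`. -/
def nz (ν : I →₀ ℕ) : I →₀ ℤ := Finsupp.mapRange (fun n : ℕ => (n : ℤ)) rfl ν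

/-- The multiplicative extension to `ℤ[I] × ℤ[I]` of generator values `g : I → I → 𝔽`. -/
def extZ {𝔽 : Type} [Field 𝔽] (g : I → I → 𝔽) (ν μ : I →₀ ℤ) : 𝔽 :=
  ν.prod fun i m => μ.prod fun j n => g i j ^ (m * n)

/-- The form `⟨i,j⟩ = v^{-i·j} β(i,j) ξ(j,i)`, extended multiplicatively to `ℤ[I]`. -/
def ang {𝔽 : Type} [Field 𝔽] (cd : CartanDatum I) (v : 𝔽) (βg ξg : I → I → 𝔽) :
    (I →₀ ℤ) → (I →₀ ℤ) → 𝔽 :=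
  extZ fun i j => v ^ (-(cd.c i j)) * βg i j * ξg j i

/-- The monomial in `F : I → A` associated with a word `w`. -/
def wordProd {A : Type} [Monoid A] (F : I → A) (w : FreeMonoid I) : A :=
  ((FreeMonoid.toList w).map F).prod

/-- `x` is homogeneous of degree `μ` in the subalgebra generated by the image of `F`. -/
def HomogIn (𝔽 : Type) [Field 𝔽] [DecidableEq I] {A : Type} [Ring A] [Algebra 𝔽 A]
    (F : I → A) (μ : I →₀ ℕ) (x : A) : Prop :=
  x ∈ Submodule.span 𝔽 {z | ∃ w, wt w = μ ∧ z = wordProd F w}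

end

/-!
Write `φ x y = ε₋ (ρ x y)`. Every identity is verified on generators and propagated along
products. The operators `𝒦_ν`, `𝒥_ν` act diagonally on the basis `K'_τ F_w J'_σ` by a character of
the degree, and the basis is closed under multiplication up to scalars, so they are algebra
endomorphisms. Together with the twisted Leibniz rule for `ⱼ𝒮` this makes `̂'𝔣⁻` a module algebra
over `̂'𝔣⁺` (for the anti-action `ρ` and `Δ₊`), which gives `φ(x, y'y'') = φ(Δ₊ x, y' ⊗ y'')`.
The compatibility `φ(x'x'', y) = φ(x' ⊗ x'', Δ₋ᵒᵖ y)` holds on generators `y` by the explicit action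
of `ρ` on `F_i`, `K'_ν`, `J'_ν`, and the first compatibility shows it is stable under products in
`y`. For the antipodes, `S₋` is an anti-coalgebra map, so the set of `x` with
`φ(S₊ x, S₋ z) = φ(x, z)` for all `z` is closed under products; on `K_ν`, `J_ν` this is the symmetry
of the bicharacters under `(ν, μ) ↦ (-ν, -μ)`, and on `E_j` both sides are derivations in `z`
twisted by the same characters, which agree on generators.
-/

open Set

section Weights

variable {I : Type}

theorem induction_δZ {p : (I →₀ ℤ) → Prop} (zero : p 0)
    (add : ∀ i ν, p ν → p (δZ i + ν)) (neg : ∀ i ν, p ν → p (-δZ i + ν)) (ν : I →₀ ℤ) : p ν := by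
  induction ν using Finsupp.induction with
  | zero => exact zero
  | single_add i n ν _ hn hν =>
    clear hn
    induction n using Int.induction_on with
    | zero => simpa using hν
    | succ n ih =>
      rw [add_comm (n : ℤ), Finsupp.single_add, add_assoc]
      exact add i _ ih
    | pred n ih =>
      rw [sub_eq_neg_add, Finsupp.single_add, add_assoc, Finsupp.single_neg]
      exact neg i _ ih

theorem nz_add (a b : I →₀ ℕ) : nz (a + b) = nz a + nz b := by
  simp [nz, Finsupp.mapRange_add]

theorem wordProd_mul {A : Type} [Monoid A] (F : I → A) (w u : FreeMonoid I) :
    wordProd F (w * u) = wordProd F w * wordProd F u := by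
  simp [wordProd]

variable [DecidableEq I]

theorem wt_one : wt (1 : FreeMonoid I) = 0 := by simp [wt]

theorem wt_mul (w u : FreeMonoid I) : wt (w * u) = wt w + wt u := by
  simp [wt, ← Multiset.coe_add, Multiset.toFinsupp_add]

theorem nz_wt_of (i : I) : nz (wt (FreeMonoid.of i)) = δZ i := by
  simp [wt, nz, δZ]

end Weights

section Bimultiplicative

variable {I : Type} {𝔽 : Type} [Field 𝔽]

structure IsBimultiplicative (α : (I →₀ ℤ) → (I →₀ ℤ) → 𝔽) : Prop where
  add_left : ∀ a b c, α (a + b) c = α a c * α b c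
  add_right : ∀ a b c, α a (b + c) = α a b * α a c
  zero_left : ∀ c, α 0 c = 1
  zero_right : ∀ a, α a 0 = 1

namespace IsBimultiplicative

variable {α : (I →₀ ℤ) → (I →₀ ℤ) → 𝔽}

theorem flip (hα : IsBimultiplicative α) : IsBimultiplicative (flip α) :=
  ⟨fun a b c => hα.add_right c a b, fun a b c => hα.add_left b c a, hα.zero_right, hα.zero_left⟩

theorem neg_neg (hα : IsBimultiplicative α) (a b : I →₀ ℤ) : α (-a) (-b) = α a b := by
  have h₁ : α (-a) (-b) * α a (-b) = 1 := by rw [← hα.add_left, neg_add_cancel, hα.zero_left]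
  have h₂ : α a (-b) * α a b = 1 := by rw [← hα.add_right, neg_add_cancel, hα.zero_right]
  linear_combination α a b * h₁ - α (-a) (-b) * h₂

theorem ne_zero (hα : IsBimultiplicative α) (a b : I →₀ ℤ) : α a b ≠ 0 :=
  left_ne_zero_of_mul_eq_one (b := α a (-b)) <| by
    rw [← hα.add_right, add_neg_cancel, hα.zero_right]

end IsBimultiplicative

variable {g : I → I → 𝔽}

theorem isBimultiplicative_extZ (hg : ∀ i j, g i j ≠ 0) : IsBimultiplicative (extZ g) where
  add_left _ _ _ := Finsupp.prod_add_index' (fun _ => by simp [Finsupp.prod]) fun _ _ _ => by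
    simp only [← Finsupp.prod_mul, add_mul, zpow_add₀ (hg _ _)]
  add_right _ _ _ := by
    simp only [extZ, ← Finsupp.prod_mul]
    refine Finsupp.prod_congr fun _ _ => Finsupp.prod_add_index' (fun _ => by simp) fun _ _ _ => ?_
    rw [mul_add, zpow_add₀ (hg _ _)]
  zero_left _ := by simp [extZ]
  zero_right _ := by simp [extZ, Finsupp.prod]

theorem extZ_δZ (i j : I) : extZ g (δZ i) (δZ j) = g i j := by
  simp [extZ, δZ]

end Bimultiplicative

section SkewCommutation

variable {I : Type} {R : Type} [CommRing R] {A : Type} [Ring A] [Algebra R A]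

theorem mul_eq_smul_mul_of_δZ (K : (I →₀ ℤ) → A) (hK0 : K 0 = 1)
    (hKadd : ∀ a b, K (a + b) = K a * K b) (χ : (I →₀ ℤ) → R) (hχ0 : χ 0 = 1)
    (hχadd : ∀ a b, χ (a + b) = χ a * χ b) (x : A)
    (h : ∀ i, K (δZ i) * x = χ (δZ i) • (x * K (δZ i))) (ν : I →₀ ℤ) :
    K ν * x = χ ν • (x * K ν) := by
  induction ν using induction_δZ with
  | zero => rw [hK0, hχ0, one_mul, mul_one, one_smul]
  | add i ν ih =>
    rw [hKadd, hχadd, mul_assoc, ih, mul_smul_comm, ← mul_assoc, h, smul_mul_assoc, smul_smul,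
      mul_assoc, mul_comm (χ ν)]
  | neg i ν ih =>
    have hinv : K (-δZ i) * K (δZ i) = 1 := by rw [← hKadd, neg_add_cancel, hK0]
    have hχinv : χ (-δZ i) * χ (δZ i) = 1 := by rw [← hχadd, neg_add_cancel, hχ0]
    have hneg : K (-δZ i) * x = χ (-δZ i) • (x * K (-δZ i)) := by
      calc K (-δZ i) * x = (χ (-δZ i) * χ (δZ i)) • (K (-δZ i) * x * (K (δZ i) * K (-δZ i))) := by
            rw [hχinv, ← hKadd, add_neg_cancel, hK0, one_smul, mul_one]
        _ = χ (-δZ i) • (K (-δZ i) * (K (δZ i) * x) * K (-δZ i)) := by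
            rw [h, mul_smul_comm, smul_mul_assoc, smul_smul]; noncomm_ring
        _ = χ (-δZ i) • (x * K (-δZ i)) := by rw [← mul_assoc, hinv, one_mul]
    rw [hKadd, hχadd, mul_assoc, ih, mul_smul_comm, ← mul_assoc, hneg, smul_mul_assoc, smul_smul,
      mul_assoc, mul_comm (χ ν)]

variable (R) in
def skewCommutant (u : A) : Submonoid A where
  carrier := {x | ∃ c : R, x * u = c • (u * x)}
  one_mem' := ⟨1, by simp⟩
  mul_mem' := by
    rintro x y ⟨c, hc⟩ ⟨d, hd⟩
    exact ⟨c * d, by rw [mul_assoc, hd, mul_smul_comm, ← mul_assoc, hc, smul_mul_assoc, smul_smul,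
      mul_comm, mul_assoc]⟩

theorem monomial_mul_monomial {k₁ w j₁ k₂ u j₂ : A} {c : R} (hjk : j₁ * k₂ = k₂ * j₁)
    (hju : j₁ * u = u * j₁) (hwk : w * k₂ = c • (k₂ * w)) :
    k₁ * w * j₁ * (k₂ * u * j₂) = c • (k₁ * k₂ * (w * u) * (j₁ * j₂)) := by
  calc k₁ * w * j₁ * (k₂ * u * j₂) = k₁ * w * (j₁ * k₂) * u * j₂ := by noncomm_ring
    _ = k₁ * (w * k₂) * (j₁ * u) * j₂ := by rw [hjk]; noncomm_ring
    _ = c • (k₁ * k₂ * (w * u) * (j₁ * j₂)) := by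
        rw [hwk, hju, mul_smul_comm, smul_mul_assoc, smul_mul_assoc]; noncomm_ring

end SkewCommutation

section Generation

variable {I : Type} {𝔽 : Type} [Field 𝔽] {A : Type} [Ring A] [Algebra 𝔽 A]

theorem adjoin_range_eq_top (E : I → A) (K J : (I →₀ ℤ) → A)
    (b : Module.Basis ((I →₀ ℤ) × FreeMonoid I × (I →₀ ℤ)) 𝔽 A)
    (hb : ∀ p, b p = K p.1 * wordProd E p.2.1 * J p.2.2) :
    Algebra.adjoin 𝔽 (range E ∪ range K ∪ range J) = ⊤ := by
  set S := Algebra.adjoin 𝔽 (range E ∪ range K ∪ range J)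
  have hword (w : FreeMonoid I) : wordProd E w ∈ S :=
    Subalgebra.list_prod_mem _ fun x hx => by
      obtain ⟨i, -, rfl⟩ := List.mem_map.mp hx
      exact Algebra.subset_adjoin (Or.inl (Or.inl ⟨i, rfl⟩))
  have hspan : Submodule.span 𝔽 (range b) ≤ Subalgebra.toSubmodule S :=
    Submodule.span_le.mpr <| range_subset_iff.mpr fun p => by
      rw [hb]
      exact S.mul_mem (S.mul_mem (Algebra.subset_adjoin (Or.inl (Or.inr ⟨_, rfl⟩))) (hword _))
        (Algebra.subset_adjoin (Or.inr ⟨_, rfl⟩))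
  exact eq_top_iff.mpr fun x _ => hspan (b.span_eq ▸ Submodule.mem_top)

theorem adjoin_range_induction {E : I → A} {K J : (I →₀ ℤ) → A}
    (hgen : Algebra.adjoin 𝔽 (range E ∪ range K ∪ range J) = ⊤) {P : A → Prop}
    (hE : ∀ i, P (E i)) (hK : ∀ ν, P (K ν)) (hJ : ∀ ν, P (J ν))
    (halg : ∀ c : 𝔽, P (algebraMap 𝔽 A c)) (hadd : ∀ x y, P x → P y → P (x + y))
    (hmul : ∀ x y, P x → P y → P (x * y)) (x : A) : P x :=
  Algebra.adjoin_induction (p := fun x _ => P x) (hx := hgen ▸ Algebra.mem_top)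
    (by rintro _ ((⟨i, rfl⟩ | ⟨ν, rfl⟩) | ⟨ν, rfl⟩) <;> simp only [hE, hK, hJ]) halg
    (fun x y _ _ => hadd x y) (fun x y _ _ => hmul x y)

theorem linearMap_eq_of_map_mul {s : Set A} (hs : Algebra.adjoin 𝔽 s = ⊤) {φ ψ : A →ₗ[𝔽] 𝔽}
    (hφ1 : φ 1 = 1) (hψ1 : ψ 1 = 1) (hφ : ∀ x y, φ (x * y) = φ x * φ y)
    (hψ : ∀ x y, ψ (x * y) = ψ x * ψ y) (h : EqOn φ ψ s) : φ = ψ :=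
  congrArg AlgHom.toLinearMap <| AlgHom.ext_of_adjoin_eq_top hs
    (φ₁ := AlgHom.ofLinearMap φ hφ1 hφ) (φ₂ := AlgHom.ofLinearMap ψ hψ1 hψ) h

theorem eq_of_twisted_derivation {s : Set A} (hs : Algebra.adjoin 𝔽 s = ⊤) {χ₁ χ₂ : A →ₗ[𝔽] 𝔽}
    (hχ₁ : χ₁ 1 = 1) (hχ₂ : χ₂ 1 = 1) {D D' : A →ₗ[𝔽] 𝔽}
    (hD : ∀ x y, D (x * y) = D x * χ₁ y + χ₂ x * D y)
    (hD' : ∀ x y, D' (x * y) = D' x * χ₁ y + χ₂ x * D' y) (h : EqOn D D' s) : D = D' := by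
  suffices ∀ x, (D - D') x = 0 from LinearMap.ext fun x => sub_eq_zero.mp (this x)
  have hmul (x y : A) : (D - D') (x * y) = (D - D') x * χ₁ y + χ₂ x * (D - D') y := by
    simp only [LinearMap.sub_apply, hD, hD']; ring
  have hone : (D - D') 1 = 0 := by simpa [hχ₁, hχ₂] using hmul 1 1
  intro x
  induction (hs ▸ Algebra.mem_top : x ∈ Algebra.adjoin 𝔽 s) using Algebra.adjoin_induction with
  | mem x hx => simp [h hx]
  | algebraMap c => simp [Algebra.algebraMap_eq_smul_one, hone]
  | add x y _ _ hx hy => simp only [map_add, hx, hy, add_zero]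
  | mul x y _ _ hx hy => rw [hmul, hx, hy, zero_mul, mul_zero, add_zero]

end Generation

section DiagonalOperators

variable {𝔽 : Type} [Field 𝔽] {A : Type} [Ring A] [Algebra 𝔽 A] {ι : Type}

theorem map_mul_of_eigenbasis (b : Module.Basis ι 𝔽 A) (mul : ι → ι → ι)
    (hb : ∀ p q, ∃ c : 𝔽, b p * b q = c • b (mul p q)) (f : A →ₗ[𝔽] A) (eig : ι → 𝔽)
    (hf : ∀ p, f (b p) = eig p • b p) (heig : ∀ p q, eig (mul p q) = eig p * eig q) (x y : A) :
    f (x * y) = f x * f y := by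
  have : (LinearMap.mul 𝔽 A).compr₂ f = (LinearMap.mul 𝔽 A).compl₁₂ f f :=
    b.ext fun p => b.ext fun q => by
      obtain ⟨c, hc⟩ := hb p q
      rw [LinearMap.compr₂_apply, LinearMap.compl₁₂_apply, LinearMap.mul_apply',
        LinearMap.mul_apply', hf, hf, smul_mul_smul_comm, hc, map_smul, hf, heig, smul_smul,
        smul_smul, mul_comm c]
  exact LinearMap.congr_fun₂ this x y

end DiagonalOperators

section Monomials

variable {I : Type} {A : Type} [Ring A] {F : I → A} {K J : (I →₀ ℤ) → A}

theorem commute_wordProd (hJ0 : J 0 = 1) (hJadd : ∀ a b, J (a + b) = J a * J b)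
    (hJF : ∀ i j, J (δZ i) * F j = F j * J (δZ i)) (σ : I →₀ ℤ) (w : FreeMonoid I) :
    Commute (J σ) (wordProd F w) := by
  refine Commute.list_prod_right _ _ fun x hx => ?_
  obtain ⟨j, -, rfl⟩ := List.mem_map.mp hx
  simpa [Commute, SemiconjBy] using mul_eq_smul_mul_of_δZ J hJ0 hJadd (fun _ => (1 : ℤ)) rfl
    (fun _ _ => (one_mul 1).symm) (F j) (fun i => by rw [one_smul]; exact hJF i j) σ

variable {𝔽 : Type} [Field 𝔽] [Algebra 𝔽 A]

theorem wordProd_mem_skewCommutant (hK0 : K 0 = 1) (hKadd : ∀ a b, K (a + b) = K a * K b)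
    {c : I → I → 𝔽} (hc : ∀ i j, c i j ≠ 0) (hKF : ∀ i j, K (δZ i) * F j = c i j • (F j * K (δZ i)))
    (σ : I →₀ ℤ) (w : FreeMonoid I) : wordProd F w ∈ skewCommutant 𝔽 (K σ) := by
  refine Submonoid.list_prod_mem _ fun x hx => ?_
  obtain ⟨j, -, rfl⟩ := List.mem_map.mp hx
  have hχ := isBimultiplicative_extZ hc
  have hconj := mul_eq_smul_mul_of_δZ K hK0 hKadd (extZ c · (δZ j)) (hχ.zero_left _)
    (fun a b => hχ.add_left a b _) (F j) (fun i => by rw [extZ_δZ]; exact hKF i j) (-σ)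
  refine ⟨extZ c (-σ) (δZ j), ?_⟩
  calc F j * K σ = K σ * (K (-σ) * F j) * K σ := by
        rw [← mul_assoc, ← hKadd, add_neg_cancel, hK0, one_mul]
    _ = extZ c (-σ) (δZ j) • (K σ * F j) := by
        rw [hconj, mul_smul_comm, smul_mul_assoc, mul_assoc, mul_assoc, ← hKadd, neg_add_cancel,
          hK0, mul_one]

theorem basis_mul_basis (hK0 : K 0 = 1) (hKadd : ∀ a b, K (a + b) = K a * K b)
    (hJ0 : J 0 = 1) (hJadd : ∀ a b, J (a + b) = J a * J b) (hKJ : ∀ a b, K a * J b = J b * K a)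
    {c : I → I → 𝔽} (hc : ∀ i j, c i j ≠ 0) (hKF : ∀ i j, K (δZ i) * F j = c i j • (F j * K (δZ i)))
    (hJF : ∀ i j, J (δZ i) * F j = F j * J (δZ i))
    (b : Module.Basis ((I →₀ ℤ) × FreeMonoid I × (I →₀ ℤ)) 𝔽 A)
    (hb : ∀ p, b p = K p.1 * wordProd F p.2.1 * J p.2.2) (p q) :
    ∃ d : 𝔽, b p * b q = d • b (p.1 + q.1, p.2.1 * q.2.1, p.2.2 + q.2.2) := by
  obtain ⟨d, hd⟩ := wordProd_mem_skewCommutant hK0 hKadd hc hKF q.1 p.2.1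
  refine ⟨d, ?_⟩
  rw [hb, hb, hb, monomial_mul_monomial (hKJ _ _).symm (commute_wordProd hJ0 hJadd hJF _ _) hd,
    hKadd, hJadd, wordProd_mul]

end Monomials

section MonomialScaling

variable {I : Type} [DecidableEq I] {𝔽 : Type} [Field 𝔽] {A : Type} [Ring A] [Algebra 𝔽 A]
  {F : I → A} {K J : (I →₀ ℤ) → A}

variable (F K J) in
def ScalesMonomials (α : (I →₀ ℤ) → (I →₀ ℤ) → 𝔽) (f : (I →₀ ℤ) → A →ₗ[𝔽] A) : Prop :=
  ∀ ν τ σ w, f ν (K τ * wordProd F w * J σ)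
    = (α ν τ * α ν (nz (wt w))) • (K τ * wordProd F w * J σ)

structure IsMultiplicativeFamily (f : (I →₀ ℤ) → A →ₗ[𝔽] A) : Prop where
  map_mul : ∀ ν x y, f ν (x * y) = f ν x * f ν y
  add : ∀ a b, f (a + b) = f a * f b
  zero : f 0 = 1

namespace ScalesMonomials

variable {α : (I →₀ ℤ) → (I →₀ ℤ) → 𝔽} {f : (I →₀ ℤ) → A →ₗ[𝔽] A}

theorem apply_K (hf : ScalesMonomials F K J α f) (hα : ∀ ν, α ν 0 = 1) (hJ0 : J 0 = 1)
    (ν τ : I →₀ ℤ) : f ν (K τ) = α ν τ • K τ := by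
  simpa [wordProd, wt_one, nz, hα, hJ0] using hf ν τ 0 1

theorem apply_J (hf : ScalesMonomials F K J α f) (hα : ∀ ν, α ν 0 = 1) (hK0 : K 0 = 1)
    (ν σ : I →₀ ℤ) : f ν (J σ) = J σ := by
  simpa [wordProd, wt_one, nz, hα, hK0] using hf ν 0 σ 1

theorem apply_one (hf : ScalesMonomials F K J α f) (hα : ∀ ν, α ν 0 = 1) (hK0 : K 0 = 1)
    (hJ0 : J 0 = 1) (ν : I →₀ ℤ) : f ν 1 = 1 := by
  simpa [hJ0] using hf.apply_J hα hK0 ν 0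

theorem apply_F (hf : ScalesMonomials F K J α f) (hα : ∀ ν, α ν 0 = 1) (hK0 : K 0 = 1)
    (hJ0 : J 0 = 1) (ν : I →₀ ℤ) (i : I) : f ν (F i) = α ν (δZ i) • F i := by
  simpa [wordProd, nz_wt_of, hα, hK0, hJ0] using hf ν 0 0 (FreeMonoid.of i)

theorem isMultiplicativeFamily (hf : ScalesMonomials F K J α f) (hα : IsBimultiplicative α)
    (b : Module.Basis ((I →₀ ℤ) × FreeMonoid I × (I →₀ ℤ)) 𝔽 A)
    (hb : ∀ p, b p = K p.1 * wordProd F p.2.1 * J p.2.2)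
    (hmul : ∀ p q, ∃ c : 𝔽, b p * b q = c • b (p.1 + q.1, p.2.1 * q.2.1, p.2.2 + q.2.2)) :
    IsMultiplicativeFamily f where
  map_mul ν := map_mul_of_eigenbasis b _ hmul (f ν) (fun p => α ν p.1 * α ν (nz (wt p.2.1)))
    (fun p => hb p ▸ hf _ _ _ _) fun p q => by simp only [hα.add_right, wt_mul, nz_add]; ring
  add a a' := b.ext fun p => by
    rw [hb, Module.End.mul_apply, hf, hf, map_smul, hf, smul_smul, hα.add_left, hα.add_left]
    ring_nf
  zero := b.ext fun p => by
    rw [hb, hf, hα.zero_left, hα.zero_left, mul_one, one_smul, Module.End.one_apply]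

end ScalesMonomials

end MonomialScaling

section Pairing

open TensorProduct

variable {𝔽 : Type} [Field 𝔽] {H A : Type} [Ring H] [Algebra 𝔽 H] [Ring A] [Algebra 𝔽 A]
  {ρ : H →ₗ[𝔽] Module.End 𝔽 A}

def tensorAction (ρ : H →ₗ[𝔽] Module.End 𝔽 A) : H ⊗[𝔽] H →ₗ[𝔽] Module.End 𝔽 (A ⊗[𝔽] A) :=
  lift ((mapBilinear (RingHom.id 𝔽) A A A A).compl₁₂ ρ ρ)

@[simp]
theorem tensorAction_tmul (ρ : H →ₗ[𝔽] Module.End 𝔽 A) (a b : H) :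
    tensorAction ρ (a ⊗ₜ b) = map (ρ a) (ρ b) := by
  simp [tensorAction]

theorem tensorAction_mul (hρ : ∀ x y, ρ (x * y) = ρ y * ρ x)
    (s t : H ⊗[𝔽] H) : tensorAction ρ (s * t) = tensorAction ρ t * tensorAction ρ s := by
  induction s using TensorProduct.induction_on with
  | zero => simp
  | add s s' hs hs' => simp [add_mul, mul_add, hs, hs']
  | tmul a b =>
    induction t using TensorProduct.induction_on with
    | zero => simp
    | add t t' ht ht' => simp [mul_add, add_mul, ht, ht']
    | tmul c d => simp [hρ, TensorProduct.map_mul]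

def ActsMultiplicatively (ρ : H →ₗ[𝔽] Module.End 𝔽 A) (Δ : H →ₐ[𝔽] H ⊗[𝔽] H) (x : H) : Prop :=
  ρ x ∘ₗ LinearMap.mul' 𝔽 A = LinearMap.mul' 𝔽 A ∘ₗ tensorAction ρ (Δ x)

theorem ActsMultiplicatively.mul (hρ : ∀ x y, ρ (x * y) = ρ y * ρ x) {Δ : H →ₐ[𝔽] H ⊗[𝔽] H}
    {x x' : H} (hx : ActsMultiplicatively ρ Δ x) (hx' : ActsMultiplicatively ρ Δ x') :
    ActsMultiplicatively ρ Δ (x * x') := by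
  rw [ActsMultiplicatively, hρ, map_mul, tensorAction_mul hρ, Module.End.mul_eq_comp,
    Module.End.mul_eq_comp, LinearMap.comp_assoc, hx, ← LinearMap.comp_assoc, hx',
    LinearMap.comp_assoc]

theorem actsMultiplicatively_of_map_mul {Δ : H →ₐ[𝔽] H ⊗[𝔽] H} {g : H} (hΔ : Δ g = g ⊗ₜ g)
    (hmul : ∀ y y', ρ g (y * y') = ρ g y * ρ g y') : ActsMultiplicatively ρ Δ g :=
  TensorProduct.ext' fun y y' => by simp [hΔ, hmul]

def pairing (ρ : H →ₗ[𝔽] Module.End 𝔽 A) (ε : A →ₐ[𝔽] 𝔽) : H →ₗ[𝔽] A →ₗ[𝔽] 𝔽 :=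
  ρ.compr₂ ε.toLinearMap

theorem pairing_apply (ρ : H →ₗ[𝔽] Module.End 𝔽 A) (ε : A →ₐ[𝔽] 𝔽) (x : H) (y : A) :
    pairing ρ ε x y = ε (ρ x y) := rfl

def tensorPairing (Φ : H →ₗ[𝔽] A →ₗ[𝔽] 𝔽) : H ⊗[𝔽] H →ₗ[𝔽] A ⊗[𝔽] A →ₗ[𝔽] 𝔽 :=
  dualDistrib 𝔽 A A ∘ₗ map Φ Φ

@[simp]
theorem tensorPairing_tmul_tmul (Φ : H →ₗ[𝔽] A →ₗ[𝔽] 𝔽) (a b : H) (c d : A) :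
    tensorPairing Φ (a ⊗ₜ b) (c ⊗ₜ d) = Φ a c * Φ b d := by
  simp [tensorPairing, dualDistrib_apply]

theorem pairing_mul_right (ε : A →ₐ[𝔽] 𝔽) {Δ : H →ₐ[𝔽] H ⊗[𝔽] H} {x : H}
    (hx : ActsMultiplicatively ρ Δ x) (y y' : A) :
    pairing ρ ε x (y * y') = tensorPairing (pairing ρ ε) (Δ x) (y ⊗ₜ y') := by
  have key (t : H ⊗[𝔽] H) : ε (LinearMap.mul' 𝔽 A (tensorAction ρ t (y ⊗ₜ y')))
      = tensorPairing (pairing ρ ε) t (y ⊗ₜ y') := by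
    induction t using TensorProduct.induction_on with
    | zero => simp
    | add t t' ht ht' => simp only [map_add, LinearMap.add_apply, ht, ht']
    | tmul a b => simp [pairing_apply]
  rw [pairing_apply, ← key, ← LinearMap.comp_apply, ← hx]
  rfl

theorem sum_sum_sum_sum_comm {M α β γ δ : Type} [AddCommMonoid M] [Fintype α] [Fintype β]
    [Fintype γ] [Fintype δ] (f : α → β → γ → δ → M) :
    ∑ a, ∑ b, ∑ c, ∑ d, f a b c d = ∑ c, ∑ d, ∑ b, ∑ a, f a b c d := calc
  _ = ∑ a, ∑ c, ∑ d, ∑ b, f a b c d := Finset.sum_congr rfl fun _ _ => by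
        rw [Finset.sum_comm]; exact Finset.sum_congr rfl fun _ _ => Finset.sum_comm
  _ = ∑ c, ∑ d, ∑ a, ∑ b, f a b c d := by
        rw [Finset.sum_comm]; exact Finset.sum_congr rfl fun _ _ => Finset.sum_comm
  _ = _ := Finset.sum_congr rfl fun _ _ => Finset.sum_congr rfl fun _ _ => Finset.sum_comm

theorem pairing_mul_left_mul_right {Φ : H →ₗ[𝔽] A →ₗ[𝔽] 𝔽} {ΔH : H →ₐ[𝔽] H ⊗[𝔽] H}
    {ΔA : A →ₐ[𝔽] A ⊗[𝔽] A}
    (hmulR : ∀ x y y', Φ x (y * y') = tensorPairing Φ (ΔH x) (y ⊗ₜ y')) {y₁ y₂ : A}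
    (h₁ : ∀ x x', Φ (x * x') y₁ = tensorPairing Φ (x' ⊗ₜ x) (ΔA y₁))
    (h₂ : ∀ x x', Φ (x * x') y₂ = tensorPairing Φ (x' ⊗ₜ x) (ΔA y₂)) (x x' : H) :
    Φ (x * x') (y₁ * y₂) = tensorPairing Φ (x' ⊗ₜ x) (ΔA (y₁ * y₂)) := by
  obtain ⟨n, a, b, ha⟩ := exists_sum_tmul_eq (ΔH x)
  obtain ⟨n', a', b', ha'⟩ := exists_sum_tmul_eq (ΔH x')
  obtain ⟨m, p, q, hp⟩ := exists_sum_tmul_eq (ΔA y₁)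
  obtain ⟨m', p', q', hp'⟩ := exists_sum_tmul_eq (ΔA y₂)
  rw [hmulR, map_mul ΔH, map_mul ΔA, ha, ha', hp, hp']
  simp only [Algebra.TensorProduct.tmul_mul_tmul, map_sum,
    LinearMap.coe_sum, Finset.sum_apply, tensorPairing_tmul_tmul, h₁, h₂, hmulR, hp, hp', ha, ha',
    Finset.sum_mul, Finset.mul_sum]
  rw [sum_sum_sum_sum_comm]
  exact Finset.sum_congr rfl fun _ _ => Finset.sum_congr rfl fun _ _ =>
    Finset.sum_congr rfl fun _ _ => Finset.sum_congr rfl fun _ _ => by ring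

theorem pairing_antipode_mul {Φ : H →ₗ[𝔽] A →ₗ[𝔽] 𝔽} {ΔA : A →ₐ[𝔽] A ⊗[𝔽] A}
    (hmulL : ∀ y x x', Φ (x * x') y = tensorPairing Φ (x' ⊗ₜ x) (ΔA y))
    {SH : H →ₗ[𝔽] H} (hSH : ∀ x x', SH (x * x') = SH x' * SH x) {SA : A →ₗ[𝔽] A}
    (hSA : ∀ z, ΔA (SA z) = TensorProduct.comm 𝔽 A A (map SA SA (ΔA z))) {x x' : H}
    (hx : ∀ z, Φ (SH x) (SA z) = Φ x z) (hx' : ∀ z, Φ (SH x') (SA z) = Φ x' z) (z : A) :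
    Φ (SH (x * x')) (SA z) = Φ (x * x') z := by
  obtain ⟨m, p, q, hp⟩ := exists_sum_tmul_eq (ΔA z)
  simp [hSH, hmulL, hSA, hp, map_sum, hx, hx', mul_comm]

end Pairing

section Action

open TensorProduct

variable {I : Type} {𝔽 : Type} [Field 𝔽] {H A : Type} [Ring H] [Algebra 𝔽 H] [Ring A]
  [Algebra 𝔽 A] {ρ : H →ₗ[𝔽] Module.End 𝔽 A}

theorem act_algebraMap (hρ1 : ρ 1 = 1) (c : 𝔽) : ρ (algebraMap 𝔽 H c) = c • 1 := by
  rw [Algebra.algebraMap_eq_smul_one, map_smul, hρ1]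

theorem act_eq_of_δZ {K : (I →₀ ℤ) → H} (hK0 : K 0 = 1) (hKadd : ∀ a b, K (a + b) = K a * K b)
    (hρ : ∀ x y, ρ (x * y) = ρ y * ρ x) (hρ1 : ρ 1 = 1) {c : (I →₀ ℤ) → Module.End 𝔽 A}
    (hc0 : c 0 = 1) (hcadd : ∀ a b, c (a + b) = c a * c b) (hpos : ∀ i, ρ (K (δZ i)) = c (δZ i))
    (hneg : ∀ i, ρ (K (-δZ i)) = c (-δZ i)) (ν : I →₀ ℤ) : ρ (K ν) = c ν := by
  induction ν using induction_δZ with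
  | zero => rw [hK0, hρ1, hc0]
  | add i ν ih => rw [hKadd, hρ, ih, hpos, ← hcadd, add_comm]
  | neg i ν ih => rw [hKadd, hρ, ih, hneg, ← hcadd, add_comm]

variable {E : I → H} {K J : (I →₀ ℤ) → H}

theorem actsMultiplicatively_of_generators
    (hgen : Algebra.adjoin 𝔽 (range E ∪ range K ∪ range J) = ⊤)
    (hρ : ∀ x y, ρ (x * y) = ρ y * ρ x) (hρ1 : ρ 1 = 1) {Δ : H →ₐ[𝔽] H ⊗[𝔽] H}
    (hE : ∀ i, ActsMultiplicatively ρ Δ (E i)) (hK : ∀ ν, ActsMultiplicatively ρ Δ (K ν))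
    (hJ : ∀ ν, ActsMultiplicatively ρ Δ (J ν)) (x : H) : ActsMultiplicatively ρ Δ x := by
  induction x using adjoin_range_induction hgen with
  | hE i => exact hE i
  | hK ν => exact hK ν
  | hJ ν => exact hJ ν
  | halg c =>
    refine TensorProduct.ext' fun y y' => ?_
    simp [Algebra.algebraMap_eq_smul_one, Algebra.TensorProduct.one_def, hρ1]
  | hadd x x' hx hx' =>
    rw [ActsMultiplicatively, map_add, map_add, map_add, LinearMap.add_comp, LinearMap.comp_add, hx,
      hx']
  | hmul x x' hx hx' => exact hx.mul hρ hx'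

theorem act_eq_smul_of_generators (hgen : Algebra.adjoin 𝔽 (range E ∪ range K ∪ range J) = ⊤)
    (hρ : ∀ x y, ρ (x * y) = ρ y * ρ x) (hρ1 : ρ 1 = 1) (ε : H →ₐ[𝔽] 𝔽) {y : A}
    (hE : ∀ i, ρ (E i) y = ε (E i) • y) (hK : ∀ ν, ρ (K ν) y = ε (K ν) • y)
    (hJ : ∀ ν, ρ (J ν) y = ε (J ν) • y) (x : H) : ρ x y = ε x • y := by
  induction x using adjoin_range_induction hgen with
  | hE i => exact hE i
  | hK ν => exact hK ν
  | hJ ν => exact hJ ν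
  | halg c => simp [act_algebraMap hρ1]
  | hadd x x' hx hx' => rw [map_add, LinearMap.add_apply, hx, hx', map_add, add_smul]
  | hmul x x' hx hx' => rw [hρ, Module.End.mul_apply, hx, map_smul, hx', smul_smul, map_mul,
      mul_comm]

theorem act_eq_pairing_smul (hgen : Algebra.adjoin 𝔽 (range E ∪ range K ∪ range J) = ⊤)
    (hρ : ∀ x y, ρ (x * y) = ρ y * ρ x) (hρ1 : ρ 1 = 1) (ε : A →ₐ[𝔽] 𝔽) {y : A} (hy : ε y = 1)
    (hE : ∀ i, ∃ c : 𝔽, ρ (E i) y = c • y) (hK : ∀ ν, ∃ c : 𝔽, ρ (K ν) y = c • y)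
    (hJ : ∀ ν, ∃ c : 𝔽, ρ (J ν) y = c • y) (x : H) : ρ x y = pairing ρ ε x y • y := by
  obtain ⟨c, hc⟩ : ∃ c : 𝔽, ρ x y = c • y := by
    induction x using adjoin_range_induction hgen with
    | hE i => exact hE i
    | hK ν => exact hK ν
    | hJ ν => exact hJ ν
    | halg c => exact ⟨c, by simp [act_algebraMap hρ1]⟩
    | hadd x x' hx hx' =>
      obtain ⟨c, hc⟩ := hx
      obtain ⟨c', hc'⟩ := hx'
      exact ⟨c + c', by rw [map_add, LinearMap.add_apply, hc, hc', add_smul]⟩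
    | hmul x x' hx hx' =>
      obtain ⟨c, hc⟩ := hx
      obtain ⟨c', hc'⟩ := hx'
      exact ⟨c * c', by rw [hρ, Module.End.mul_apply, hc, map_smul, hc', smul_smul]⟩
  rw [pairing_apply, hc, map_smul, hy, smul_eq_mul, mul_one]

theorem act_eq_pairing_smul_add_smul_one
    (hgen : Algebra.adjoin 𝔽 (range E ∪ range K ∪ range J) = ⊤)
    (hρ : ∀ x y, ρ (x * y) = ρ y * ρ x) (hρ1 : ρ 1 = 1) (ε : A →ₐ[𝔽] 𝔽) (εH : H →ₐ[𝔽] 𝔽)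
    (hone : ∀ x, ρ x 1 = εH x • 1) {f k : A} (hf : ε f = 0) (hk : ε k = 1)
    (hkx : ∀ x, ρ x k = pairing ρ ε x k • k)
    (hE : ∀ i, ∃ d : 𝔽, ρ (E i) f = pairing ρ ε (E i) k • f + d • 1)
    (hK : ∀ ν, ∃ d : 𝔽, ρ (K ν) f = pairing ρ ε (K ν) k • f + d • 1)
    (hJ : ∀ ν, ∃ d : 𝔽, ρ (J ν) f = pairing ρ ε (J ν) k • f + d • 1) (x : H) :
    ρ x f = pairing ρ ε x k • f + pairing ρ ε x f • 1 := by
  obtain ⟨d, hd⟩ : ∃ d : 𝔽, ρ x f = pairing ρ ε x k • f + d • 1 := by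
    induction x using adjoin_range_induction hgen with
    | hE i => exact hE i
    | hK ν => exact hK ν
    | hJ ν => exact hJ ν
    | halg c => exact ⟨0, by simp [pairing_apply, act_algebraMap hρ1, hk]⟩
    | hadd x x' hx hx' =>
      obtain ⟨d, hd⟩ := hx
      obtain ⟨d', hd'⟩ := hx'
      refine ⟨d + d', ?_⟩
      rw [map_add, LinearMap.add_apply, hd, hd', map_add, LinearMap.add_apply]
      module
    | hmul x x' hx hx' =>
      obtain ⟨d, hd⟩ := hx
      obtain ⟨d', hd'⟩ := hx'
      have hxx' : pairing ρ ε (x * x') k = pairing ρ ε x k * pairing ρ ε x' k := by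
        rw [pairing_apply, hρ, Module.End.mul_apply, hkx x, map_smul, map_smul, ← pairing_apply,
          smul_eq_mul, mul_comm]
      refine ⟨pairing ρ ε x k * d' + d * εH x', ?_⟩
      rw [hρ, Module.End.mul_apply, hd, map_add, map_smul, map_smul, hd', hone, hxx']
      module
  have hdf : pairing ρ ε x f = d := by
    rw [pairing_apply, hd, map_add, map_smul, map_smul, hf, map_one]
    simp
  rw [hd, hdf]

theorem pairing_mul_left {F : I → A} {K' J' : (I →₀ ℤ) → A}
    (hgen : Algebra.adjoin 𝔽 (range F ∪ range K' ∪ range J') = ⊤)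
    (hρ : ∀ x y, ρ (x * y) = ρ y * ρ x) (ε : A →ₐ[𝔽] 𝔽) (εH : H →ₐ[𝔽] 𝔽)
    {ΔH : H →ₐ[𝔽] H ⊗[𝔽] H} (ΔA : A →ₐ[𝔽] A ⊗[𝔽] A) (hC : ∀ x, ActsMultiplicatively ρ ΔH x)
    (hone : ∀ x, ρ x 1 = εH x • 1) (hJ' : ∀ ν x, ρ x (J' ν) = εH x • J' ν)
    (hK' : ∀ ν x, ρ x (K' ν) = pairing ρ ε x (K' ν) • K' ν)
    (hF : ∀ i x, ρ x (F i) = pairing ρ ε x (K' (δZ i)) • F i + pairing ρ ε x (F i) • 1)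
    (hεJ' : ∀ ν, ε (J' ν) = 1)
    (hΔF : ∀ i, ΔA (F i) = J' (δZ i) ⊗ₜ F i + F i ⊗ₜ K' (δZ i))
    (hΔK' : ∀ ν, ΔA (K' ν) = K' ν ⊗ₜ K' ν) (hΔJ' : ∀ ν, ΔA (J' ν) = J' ν ⊗ₜ J' ν) (y : A) :
    ∀ x x', pairing ρ ε (x * x') y = tensorPairing (pairing ρ ε) (x' ⊗ₜ x) (ΔA y) := by
  have hεH (x : H) (ν : I →₀ ℤ) : pairing ρ ε x (J' ν) = εH x := by
    rw [pairing_apply, hJ', map_smul, hεJ', smul_eq_mul, mul_one]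
  induction y using adjoin_range_induction hgen with
  | hE i =>
    intro x x'
    rw [hΔF, map_add, tensorPairing_tmul_tmul, tensorPairing_tmul_tmul,
      hεH, pairing_apply, hρ, Module.End.mul_apply, hF, map_add, map_smul, map_smul, hone,
      map_add, map_smul, map_smul, map_smul, map_one, ← pairing_apply]
    simp only [smul_eq_mul, mul_one]
    ring
  | hK ν =>
    intro x x'
    rw [hΔK', tensorPairing_tmul_tmul, pairing_apply, hρ, Module.End.mul_apply, hK', map_smul,
      map_smul, ← pairing_apply, smul_eq_mul, mul_comm]
  | hJ ν =>
    intro x x'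
    rw [hΔJ', tensorPairing_tmul_tmul, hεH, hεH, hεH, map_mul, mul_comm]
  | halg c =>
    intro x x'
    simp [Algebra.algebraMap_eq_smul_one, Algebra.TensorProduct.one_def, pairing_apply, hone,
      mul_comm]
  | hadd y y' hy hy' =>
    intro x x'
    rw [map_add, hy, hy', map_add, map_add]
  | hmul y y' hy hy' =>
    exact pairing_mul_left_mul_right (fun x => pairing_mul_right ε (hC x)) hy hy'

theorem pairing_antipode (hgen : Algebra.adjoin 𝔽 (range E ∪ range K ∪ range J) = ⊤)
    (hK0 : K 0 = 1) {Φ : H →ₗ[𝔽] A →ₗ[𝔽] 𝔽} {ΔA : A →ₐ[𝔽] A ⊗[𝔽] A}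
    (hmulL : ∀ y x x', Φ (x * x') y = tensorPairing Φ (x' ⊗ₜ x) (ΔA y))
    {SH : H →ₗ[𝔽] H} (hSH : ∀ x x', SH (x * x') = SH x' * SH x) {SA : A →ₗ[𝔽] A}
    (hSA : ∀ z, ΔA (SA z) = TensorProduct.comm 𝔽 A A (map SA SA (ΔA z)))
    (hE : ∀ i z, Φ (SH (E i)) (SA z) = Φ (E i) z) (hK : ∀ ν z, Φ (SH (K ν)) (SA z) = Φ (K ν) z)
    (hJ : ∀ ν z, Φ (SH (J ν)) (SA z) = Φ (J ν) z) (x : H) (z : A) :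
    Φ (SH x) (SA z) = Φ x z := by
  induction x using adjoin_range_induction hgen generalizing z with
  | hE i => exact hE i z
  | hK ν => exact hK ν z
  | hJ ν => exact hJ ν z
  | halg c =>
    simp only [Algebra.algebraMap_eq_smul_one, ← hK0, map_smul, LinearMap.smul_apply, hK]
  | hadd x x' hx hx' => simp only [map_add, LinearMap.add_apply, hx, hx']
  | hmul x x' hx hx' => exact pairing_antipode_mul hmulL hSH hSA hx hx' z

end Action

section Antipode

open TensorProduct

variable {I : Type} {𝔽 : Type} [Field 𝔽] {A : Type} [Ring A] [Algebra 𝔽 A]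
  {F : I → A} {K J : (I →₀ ℤ) → A}

theorem comm_map_mul {S : A →ₗ[𝔽] A} (hS : ∀ x y, S (x * y) = S y * S x) (u w : A ⊗[𝔽] A) :
    TensorProduct.comm 𝔽 A A (map S S (u * w))
      = TensorProduct.comm 𝔽 A A (map S S w) * TensorProduct.comm 𝔽 A A (map S S u) := by
  induction u using TensorProduct.induction_on with
  | zero => simp
  | add u u' hu hu' => simp only [add_mul, mul_add, map_add, hu, hu']
  | tmul a b =>
    induction w using TensorProduct.induction_on with
    | zero => simp
    | add w w' hw hw' => simp only [mul_add, add_mul, map_add, hw, hw']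
    | tmul c d => simp [hS]

theorem comul_antipode (hgen : Algebra.adjoin 𝔽 (range F ∪ range K ∪ range J) = ⊤)
    (hK0 : K 0 = 1) (hKadd : ∀ a b, K (a + b) = K a * K b) (hJ0 : J 0 = 1)
    (hJadd : ∀ a b, J (a + b) = J a * J b) (Δ : A →ₐ[𝔽] A ⊗[𝔽] A)
    (hΔF : ∀ i, Δ (F i) = J (δZ i) ⊗ₜ F i + F i ⊗ₜ K (δZ i))
    (hΔK : ∀ ν, Δ (K ν) = K ν ⊗ₜ K ν) (hΔJ : ∀ ν, Δ (J ν) = J ν ⊗ₜ J ν)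
    {S : A →ₗ[𝔽] A} (hS1 : S 1 = 1) (hSmul : ∀ x y, S (x * y) = S y * S x)
    (hSF : ∀ i, S (F i) = -(J (-δZ i) * F i * K (-δZ i))) (hSK : ∀ ν, S (K ν) = K (-ν))
    (hSJ : ∀ ν, S (J ν) = J (-ν)) (z : A) :
    Δ (S z) = TensorProduct.comm 𝔽 A A (map S S (Δ z)) := by
  induction z using adjoin_range_induction hgen with
  | hE i =>
    have hJ (x : A) : J (-δZ i) * (J (δZ i) * x) = x := by
      rw [← mul_assoc, ← hJadd, neg_add_cancel, hJ0, one_mul]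
    have hK : K (δZ i) * K (-δZ i) = 1 := by rw [← hKadd, add_neg_cancel, hK0]
    simp only [hSF, map_neg, map_mul, hΔJ, hΔF, hΔK, mul_add, add_mul,
      Algebra.TensorProduct.tmul_mul_tmul, map_add, map_tmul, comm_tmul, hSJ, hSK,
      TensorProduct.neg_tmul, TensorProduct.tmul_neg, mul_assoc, hJ, hK, mul_one]
    abel
  | hK ν => simp [hSK, hΔK]
  | hJ ν => simp [hSJ, hΔJ]
  | halg c => simp [Algebra.algebraMap_eq_smul_one, hS1, Algebra.TensorProduct.one_def]
  | hadd z z' hz hz' => rw [map_add, map_add, hz, hz', map_add, map_add, map_add]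
  | hmul z z' hz hz' => rw [hSmul, map_mul, hz, hz', map_mul, comm_map_mul hSmul]

end Antipode

section LowerAntipode

open TensorProduct

variable {I : Type} [DecidableEq I] {𝔽 : Type} [Field 𝔽] {A : Type} [Ring A] [Algebra 𝔽 A]
  {F : I → A} {K J : (I →₀ ℤ) → A}

theorem counit_apply_antipode (hgen : Algebra.adjoin 𝔽 (range F ∪ range K ∪ range J) = ⊤)
    (hK0 : K 0 = 1) (hJ0 : J 0 = 1) {f : (I →₀ ℤ) → A →ₗ[𝔽] A} {α : (I →₀ ℤ) → (I →₀ ℤ) → 𝔽}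
    (hf : ScalesMonomials F K J α f) (hα : IsBimultiplicative α)
    (hfmul : ∀ ν x y, f ν (x * y) = f ν x * f ν y)
    (ε : A →ₐ[𝔽] 𝔽) (hεF : ∀ i, ε (F i) = 0) (hεK : ∀ ν, ε (K ν) = 1) (hεJ : ∀ ν, ε (J ν) = 1)
    {S : A →ₗ[𝔽] A} (hS1 : S 1 = 1) (hSmul : ∀ x y, S (x * y) = S y * S x)
    (hSF : ∀ i, S (F i) = -(J (-δZ i) * F i * K (-δZ i))) (hSK : ∀ ν, S (K ν) = K (-ν))
    (hSJ : ∀ ν, S (J ν) = J (-ν)) (ν : I →₀ ℤ) (z : A) : ε (f (-ν) (S z)) = ε (f ν z) := by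
  have hone := hf.apply_one hα.zero_right hK0 hJ0
  have key : ε.toLinearMap ∘ₗ f (-ν) ∘ₗ S = ε.toLinearMap ∘ₗ f ν := by
    refine linearMap_eq_of_map_mul hgen (by simp [hS1, hone]) (by simp [hone])
      (fun x y => by simp [hSmul, hfmul, mul_comm]) (fun x y => by simp [hfmul]) ?_
    rintro _ ((⟨i, rfl⟩ | ⟨μ, rfl⟩) | ⟨μ, rfl⟩) <;>
      simp [hSF, hSK, hSJ, hfmul, hf.apply_F hα.zero_right hK0 hJ0, hf.apply_K hα.zero_right hJ0,
        hf.apply_J hα.zero_right hK0, hεF, hεK, hεJ, hα.neg_neg]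
  exact LinearMap.congr_fun key z

theorem counit_derivation_antipode (hgen : Algebra.adjoin 𝔽 (range F ∪ range K ∪ range J) = ⊤)
    (hK0 : K 0 = 1) (hJ0 : J 0 = 1) {cK cJ : (I →₀ ℤ) → A →ₗ[𝔽] A}
    {α β : (I →₀ ℤ) → (I →₀ ℤ) → 𝔽} (hcK : ScalesMonomials F K J α cK)
    (hcJ : ScalesMonomials F K J β cJ) (hα : IsBimultiplicative α)
    (hβ : IsBimultiplicative β) (hKfam : IsMultiplicativeFamily cK)
    (hJfam : IsMultiplicativeFamily cJ)
    (ε : A →ₐ[𝔽] 𝔽) (hεK : ∀ ν, ε (K ν) = 1) (hεJ : ∀ ν, ε (J ν) = 1)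
    {S : A →ₗ[𝔽] A} (hSmul : ∀ x y, S (x * y) = S y * S x)
    (hSF : ∀ i, S (F i) = -(J (-δZ i) * F i * K (-δZ i))) (hSK : ∀ ν, S (K ν) = K (-ν))
    (hSJ : ∀ ν, S (J ν) = J (-ν))
    (hRK : ∀ ν z, ε (cK (-ν) (S z)) = ε (cK ν z)) (hRJ : ∀ ν z, ε (cJ (-ν) (S z)) = ε (cJ ν z))
    {j : I} {iS : A →ₗ[𝔽] A} (ξ : I → I → 𝔽)
    (hiS : ∀ x y, iS (x * y) = iS x * cJ (δZ j) y + cK (δZ j) x * iS y)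
    (hiSF : ∀ i, iS (F i) = if i = j then ξ i j • (1 : A) else 0)
    (hiSK : ∀ μ, iS (K μ) = 0) (hiSJ : ∀ μ, iS (J μ) = 0) (z : A) :
    ε (cJ (-δZ j) (iS (cK (-δZ j) (S z)))) = -ε (iS z) := by
  have hcJinv (y : A) : cJ (-δZ j) (cJ (δZ j) y) = y := by
    rw [← Module.End.mul_apply, ← hJfam.add, neg_add_cancel, hJfam.zero, Module.End.one_apply]
  have hcKinv (y : A) : cK (δZ j) (cK (-δZ j) y) = y := by
    rw [← Module.End.mul_apply, ← hKfam.add, add_neg_cancel, hKfam.zero, Module.End.one_apply]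
  have hK1 := hcK.apply_one hα.zero_right hK0 hJ0 (δZ j)
  have hJ1 := hcJ.apply_one hβ.zero_right hK0 hJ0 (δZ j)
  have key : ε.toLinearMap ∘ₗ cJ (-δZ j) ∘ₗ iS ∘ₗ cK (-δZ j) ∘ₗ S = -(ε.toLinearMap ∘ₗ iS) := by
    refine eq_of_twisted_derivation hgen (χ₁ := ε.toLinearMap ∘ₗ cJ (δZ j))
      (χ₂ := ε.toLinearMap ∘ₗ cK (δZ j)) (by simp [hJ1]) (by simp [hK1]) (fun x y => ?_)
      (fun x y => ?_) ?_
    · simp only [LinearMap.comp_apply, hSmul, hKfam.map_mul, hiS, map_add, hJfam.map_mul, map_mul,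
        hcJinv, hcKinv, AlgHom.toLinearMap_apply, hRK, hRJ]
      ring
    · simp [hiS]
      ring
    · rintro _ ((⟨i, rfl⟩ | ⟨μ, rfl⟩) | ⟨μ, rfl⟩)
      · simp [hSF, hKfam.map_mul, hcK.apply_F hα.zero_right hK0 hJ0, hcK.apply_K hα.zero_right hJ0,
          hcK.apply_J hα.zero_right hK0, hiS, hiSF, hiSK, hiSJ, hcJ.apply_K hβ.zero_right hJ0]
        split_ifs with hij
        · subst hij
          have hα' : α (-δZ i) (-δZ i) * α (-δZ i) (δZ i) = 1 := by
            rw [← hα.add_right, neg_add_cancel, hα.zero_right]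
          have hβ' : β (δZ i) (-δZ i) * β (-δZ i) (-δZ i) = 1 := by
            rw [← hβ.add_left, add_neg_cancel, hβ.zero_left]
          simp [hJfam.map_mul, hcJ.apply_K hβ.zero_right hJ0, hcJ.apply_J hβ.zero_right hK0, hεK,
            hεJ]
          linear_combination ξ i i * β (δZ i) (-δZ i) * β (-δZ i) (-δZ i) * hα' + ξ i i * hβ'
        · simp
      · simp [hSK, hcK.apply_K hα.zero_right hJ0, hiSK]
      · simp [hSJ, hcK.apply_J hα.zero_right hK0, hiSJ]
  exact LinearMap.congr_fun key z

end LowerAntipode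

theorem phi_skew_hopf_pairing_general
    {I : Type} [DecidableEq I] (cd : CartanDatum I)
    {𝔽 : Type} [Field 𝔽] [CharZero 𝔽] (v : 𝔽) (hv : Transcendental ℚ v)
    (βg ξg : I → I → 𝔽)
    (hββ : ∀ i j, βg i j * βg j i = 1)
    (hξne : ∀ i j, ξg i j ≠ 0)
    {Ap : Type} [Ring Ap] [Algebra 𝔽 Ap]
    (E : I → Ap) (K Jp : (I →₀ ℤ) → Ap)
    (hK0 : K 0 = 1) (hKadd : ∀ a b, K (a + b) = K a * K b)
    (hJ0 : Jp 0 = 1) (hJadd : ∀ a b, Jp (a + b) = Jp a * Jp b)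
    (bp : Module.Basis ((I →₀ ℤ) × FreeMonoid I × (I →₀ ℤ)) 𝔽 Ap)
    (hbp : ∀ p, bp p = K p.1 * wordProd E p.2.1 * Jp p.2.2)
    {Am : Type} [Ring Am] [Algebra 𝔽 Am]
    (F : I → Am) (K' J' : (I →₀ ℤ) → Am)
    (hK'0 : K' 0 = 1) (hK'add : ∀ a b, K' (a + b) = K' a * K' b)
    (hJ'0 : J' 0 = 1) (hJ'add : ∀ a b, J' (a + b) = J' a * J' b)
    (hK'J' : ∀ a b, K' a * J' b = J' b * K' a)
    (hK'F : ∀ i j : I, K' (δZ i) * F j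
      = (ang cd v βg ξg (δZ j) (δZ i) * (ξg i j)⁻¹) • (F j * K' (δZ i)))
    (hJ'F : ∀ i j : I, J' (δZ i) * F j = F j * J' (δZ i))
    (bm : Module.Basis ((I →₀ ℤ) × FreeMonoid I × (I →₀ ℤ)) 𝔽 Am)
    (hbm : ∀ p, bm p = K' p.1 * wordProd F p.2.1 * J' p.2.2)
    (cK cJ : (I →₀ ℤ) → (Am →ₗ[𝔽] Am))
    (hcK : ∀ (ν τ₁ τ₂ : I →₀ ℤ) (w : FreeMonoid I),
      cK ν (K' τ₁ * wordProd F w * J' τ₂)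
        = (ang cd v βg ξg ν τ₁ * ang cd v βg ξg ν (nz (wt w))) • (K' τ₁ * wordProd F w * J' τ₂))
    (hcJ : ∀ (ν τ₁ τ₂ : I →₀ ℤ) (w : FreeMonoid I),
      cJ ν (K' τ₁ * wordProd F w * J' τ₂)
        = (extZ ξg τ₁ ν * extZ ξg (nz (wt w)) ν) • (K' τ₁ * wordProd F w * J' τ₂))
    (iS : I → (Am →ₗ[𝔽] Am))
    (hiS0 : ∀ (j : I) (τ₁ τ₂ : I →₀ ℤ), iS j (K' τ₁ * J' τ₂) = 0)
    (hiSF : ∀ j i : I, iS j (F i) = if i = j then ξg i j • (1 : Am) else 0)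
    (hiSmul : ∀ (j : I) (x y : Am), iS j (x * y) = iS j x * cJ (δZ j) y + cK (δZ j) x * iS j y)
    (ρ : Ap →ₗ[𝔽] Module.End 𝔽 Am)
    (hρanti : ∀ x y : Ap, ρ (x * y) = ρ y * ρ x) (hρ1 : ρ 1 = 1)
    (hρE : ∀ j : I, ρ (E j) = (v ^ (-(cd.d j)) - v ^ (cd.d j))⁻¹ • iS j)
    (hρK : ∀ i : I, ρ (K (δZ i)) = cK (δZ i))
    (hρKinv : ∀ i : I, ρ (K (-(δZ i))) = cK (-(δZ i)))
    (hρJ : ∀ i : I, ρ (Jp (δZ i)) = cJ (δZ i))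
    (hρJinv : ∀ i : I, ρ (Jp (-(δZ i))) = cJ (-(δZ i)))
    (εm : Am →ₐ[𝔽] 𝔽)
    (hεmF : ∀ i, εm (F i) = 0) (hεmK' : ∀ ν, εm (K' ν) = 1) (hεmJ' : ∀ ν, εm (J' ν) = 1)
    (εp : Ap →ₐ[𝔽] 𝔽)
    (hεpE : ∀ i, εp (E i) = 0) (hεpK : ∀ ν, εp (K ν) = 1) (hεpJ : ∀ ν, εp (Jp ν) = 1)
    (Δp : Ap →ₐ[𝔽] (Ap ⊗[𝔽] Ap))
    (hΔpE : ∀ i, Δp (E i) = E i ⊗ₜ[𝔽] Jp (δZ i) + K (δZ i) ⊗ₜ[𝔽] E i)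
    (hΔpK : ∀ ν, Δp (K ν) = K ν ⊗ₜ[𝔽] K ν) (hΔpJ : ∀ ν, Δp (Jp ν) = Jp ν ⊗ₜ[𝔽] Jp ν)
    (Δm : Am →ₐ[𝔽] (Am ⊗[𝔽] Am))
    (hΔmF : ∀ i, Δm (F i) = J' (δZ i) ⊗ₜ[𝔽] F i + F i ⊗ₜ[𝔽] K' (δZ i))
    (hΔmK' : ∀ ν, Δm (K' ν) = K' ν ⊗ₜ[𝔽] K' ν) (hΔmJ' : ∀ ν, Δm (J' ν) = J' ν ⊗ₜ[𝔽] J' ν)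
    (Sp : Ap →ₗ[𝔽] Ap) (hSpanti : ∀ x y, Sp (x * y) = Sp y * Sp x)
    (hSpE : ∀ i, Sp (E i) = -(K (-(δZ i)) * E i * Jp (-(δZ i))))
    (hSpK : ∀ ν, Sp (K ν) = K (-ν)) (hSpJ : ∀ ν, Sp (Jp ν) = Jp (-ν))
    (Sm : Am ≃ₗ[𝔽] Am) (hSm1 : Sm 1 = 1) (hSmanti : ∀ x y, Sm (x * y) = Sm y * Sm x)
    (hSmF : ∀ i, Sm (F i) = -(J' (-(δZ i)) * F i * K' (-(δZ i))))
    (hSmK' : ∀ ν, Sm (K' ν) = K' (-ν)) (hSmJ' : ∀ ν, Sm (J' ν) = J' (-ν))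
    :
    (∀ y : Am, εm (ρ 1 y) = εm y) ∧
    (∀ x : Ap, εm (ρ x 1) = εp x) ∧
    (∀ (x : Ap) (y' y'' : Am) (n : ℕ) (a b : Fin n → Ap),
      Δp x = ∑ k, a k ⊗ₜ[𝔽] b k →
      εm (ρ x (y' * y'')) = ∑ k, εm (ρ (a k) y') * εm (ρ (b k) y'')) ∧
    (∀ (x' x'' : Ap) (y : Am) (n : ℕ) (a b : Fin n → Am),
      Δm y = ∑ k, a k ⊗ₜ[𝔽] b k →
      εm (ρ (x' * x'') y) = ∑ k, εm (ρ x' (b k)) * εm (ρ x'' (a k))) ∧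
    (∀ (x : Ap) (y : Am), εm (ρ (Sp x) y) = εm (ρ x (Sm.symm y))) := by
  have hv0 : v ≠ 0 := fun h => hv (h ▸ isAlgebraic_zero)
  have hang : IsBimultiplicative (ang cd v βg ξg) := isBimultiplicative_extZ fun i j =>
    mul_ne_zero (mul_ne_zero (zpow_ne_zero _ hv0) (left_ne_zero_of_mul_eq_one (hββ i j))) (hξne j i)
  have hξ : IsBimultiplicative (flip (extZ ξg)) := (isBimultiplicative_extZ hξne).flip
  have hgenP := adjoin_range_eq_top E K Jp bp hbp
  have hgenM := adjoin_range_eq_top F K' J' bm hbm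
  have hcKs : ScalesMonomials F K' J' (ang cd v βg ξg) cK := hcK
  have hcJs : ScalesMonomials F K' J' (flip (extZ ξg)) cJ := hcJ
  have hmono := basis_mul_basis hK'0 hK'add hJ'0 hJ'add hK'J'
    (fun i j => mul_ne_zero (hang.ne_zero _ _) (inv_ne_zero (hξne i j))) hK'F hJ'F bm hbm
  have hKfam := hcKs.isMultiplicativeFamily hang bm hbm hmono
  have hJfam := hcJs.isMultiplicativeFamily hξ bm hbm hmono
  have hρKν := act_eq_of_δZ hK0 hKadd hρanti hρ1 hKfam.zero hKfam.add hρK hρKinv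
  have hρJν := act_eq_of_δZ hJ0 hJadd hρanti hρ1 hJfam.zero hJfam.add hρJ hρJinv
  have hiSK' (j : I) (μ : I →₀ ℤ) : iS j (K' μ) = 0 := by simpa [hJ'0] using hiS0 j μ 0
  have hiSJ' (j : I) (μ : I →₀ ℤ) : iS j (J' μ) = 0 := by simpa [hK'0] using hiS0 j 0 μ
  have hC : ∀ x, ActsMultiplicatively ρ Δp x := actsMultiplicatively_of_generators hgenP hρanti hρ1
    (fun i => TensorProduct.ext' fun y y' => by simp [hΔpE, hρE, hρKν, hρJν, hiSmul, smul_add])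
    (fun ν => actsMultiplicatively_of_map_mul (hΔpK ν) (by rw [hρKν]; exact hKfam.map_mul ν))
    (fun ν => actsMultiplicatively_of_map_mul (hΔpJ ν) (by rw [hρJν]; exact hJfam.map_mul ν))
  have hJ'act (ν : I →₀ ℤ) : ∀ x, ρ x (J' ν) = εp x • J' ν :=
    act_eq_smul_of_generators hgenP hρanti hρ1 εp (fun i => by simp [hρE, hiSJ', hεpE])
      (fun μ => by simp [hρKν, hcKs.apply_J hang.zero_right hK'0, hεpK])
      (fun μ => by simp [hρJν, hcJs.apply_J hξ.zero_right hK'0, hεpJ])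
  have hone (x : Ap) : ρ x 1 = εp x • 1 := by simpa [hJ'0] using hJ'act 0 x
  have hK'act (ν : I →₀ ℤ) : ∀ x, ρ x (K' ν) = pairing ρ εm x (K' ν) • K' ν :=
    act_eq_pairing_smul hgenP hρanti hρ1 εm (hεmK' ν) (fun i => ⟨0, by simp [hρE, hiSK']⟩)
      (fun μ => ⟨_, by rw [hρKν]; exact hcKs.apply_K hang.zero_right hJ'0 μ ν⟩)
      (fun μ => ⟨_, by rw [hρJν]; exact hcJs.apply_K hξ.zero_right hJ'0 μ ν⟩)
  have hFact (i : I) := act_eq_pairing_smul_add_smul_one hgenP hρanti hρ1 εm εp hone (hεmF i)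
    (hεmK' (δZ i)) (hK'act (δZ i))
    (fun j => ⟨(v ^ (-(cd.d j)) - v ^ (cd.d j))⁻¹ * if i = j then ξg i j else 0, by
      split_ifs with h <;> simp [pairing_apply, hρE, hiSF, hiSK', smul_smul, h]⟩)
    (fun μ => ⟨0, by simp [pairing_apply, hρKν, hcKs.apply_F hang.zero_right hK'0 hJ'0,
      hcKs.apply_K hang.zero_right hJ'0, hεmK']⟩)
    (fun μ => ⟨0, by simp [pairing_apply, hρJν, hcJs.apply_F hξ.zero_right hK'0 hJ'0,
      hcJs.apply_K hξ.zero_right hJ'0, hεmK']⟩)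
  have hD := pairing_mul_left hgenM hρanti εm εp Δm hC hone hJ'act hK'act hFact hεmJ' hΔmF
    hΔmK' hΔmJ'
  have hRK := counit_apply_antipode hgenM hK'0 hJ'0 hcKs hang hKfam.map_mul εm hεmF hεmK' hεmJ'
    (S := Sm.toLinearMap) hSm1 hSmanti hSmF hSmK' hSmJ'
  have hRJ := counit_apply_antipode hgenM hK'0 hJ'0 hcJs hξ hJfam.map_mul εm hεmF hεmK' hεmJ'
    (S := Sm.toLinearMap) hSm1 hSmanti hSmF hSmK' hSmJ'
  have hSA := comul_antipode hgenM hK'0 hK'add hJ'0 hJ'add Δm hΔmF hΔmK' hΔmJ'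
    (S := Sm.toLinearMap) hSm1 hSmanti hSmF hSmK' hSmJ'
  have hAnti := pairing_antipode hgenP hK0 (Φ := pairing ρ εm) hD hSpanti hSA
    (fun i z => by
      have := counit_derivation_antipode hgenM hK'0 hJ'0 hcKs hcJs hang hξ hKfam hJfam εm hεmK'
        hεmJ' (S := Sm.toLinearMap) hSmanti hSmF hSmK' hSmJ' hRK hRJ ξg (hiSmul i) (hiSF i)
        (hiSK' i) (hiSJ' i) z
      simp only [LinearEquiv.coe_coe] at this
      simp [pairing_apply, hSpE, hρanti, hρE, hρKν, hρJν, this])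
    (fun ν z => by simpa [pairing_apply, hSpK, hρKν] using hRK ν z)
    (fun ν z => by simpa [pairing_apply, hSpJ, hρJν] using hRJ ν z)
  refine ⟨fun y => by rw [hρ1]; rfl, fun x => by simp [hone], fun x y' y'' n a b h => ?_,
    fun x' x'' y n a b h => ?_, fun x y => ?_⟩
  · simpa [h, map_sum, pairing_apply] using pairing_mul_right εm (hC x) y' y''
  · simpa [h, map_sum, pairing_apply, mul_comm] using hD y x' x''
  · simpa [pairing_apply] using hAnti x (Sm.symm y)

theorem phi_skew_hopf_pairing
    {I : Type} [Fintype I] [DecidableEq I] (cd : CartanDatum I)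
    {𝔽 : Type} [Field 𝔽] [CharZero 𝔽] (v : 𝔽) (hv : Transcendental ℚ v)
    (βg ξg : I → I → 𝔽)
    (hββ : ∀ i j, βg i j * βg j i = 1) (hβii : ∀ i, βg i i = 1)
    (hξsymm : ∀ i j, ξg i j = ξg j i) (hξne : ∀ i j, ξg i j ≠ 0)
    {Ap : Type} [Ring Ap] [Algebra 𝔽 Ap]
    (E : I → Ap) (K Jp : (I →₀ ℤ) → Ap)
    (hK0 : K 0 = 1) (hKadd : ∀ a b, K (a + b) = K a * K b)
    (hJ0 : Jp 0 = 1) (hJadd : ∀ a b, Jp (a + b) = Jp a * Jp b)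
    (hKJ : ∀ a b, K a * Jp b = Jp b * K a)
    (hKE : ∀ i j : I, K (δZ i) * E j = ang cd v βg ξg (δZ i) (δZ j) • (E j * K (δZ i)))
    (hJE : ∀ i j : I, Jp (δZ i) * E j = ξg j i • (E j * Jp (δZ i)))
    (bp : Module.Basis ((I →₀ ℤ) × FreeMonoid I × (I →₀ ℤ)) 𝔽 Ap)
    (hbp : ∀ p, bp p = K p.1 * wordProd E p.2.1 * Jp p.2.2)
    {Am : Type} [Ring Am] [Algebra 𝔽 Am]
    (F : I → Am) (K' J' : (I →₀ ℤ) → Am)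
    (hK'0 : K' 0 = 1) (hK'add : ∀ a b, K' (a + b) = K' a * K' b)
    (hJ'0 : J' 0 = 1) (hJ'add : ∀ a b, J' (a + b) = J' a * J' b)
    (hK'J' : ∀ a b, K' a * J' b = J' b * K' a)
    (hK'F : ∀ i j : I, K' (δZ i) * F j
      = (ang cd v βg ξg (δZ j) (δZ i) * (ξg i j)⁻¹) • (F j * K' (δZ i)))
    (hJ'F : ∀ i j : I, J' (δZ i) * F j = F j * J' (δZ i))
    (bm : Module.Basis ((I →₀ ℤ) × FreeMonoid I × (I →₀ ℤ)) 𝔽 Am)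
    (hbm : ∀ p, bm p = K' p.1 * wordProd F p.2.1 * J' p.2.2)
    (cK cJ : (I →₀ ℤ) → (Am →ₗ[𝔽] Am))
    (hcK : ∀ (ν τ₁ τ₂ : I →₀ ℤ) (w : FreeMonoid I),
      cK ν (K' τ₁ * wordProd F w * J' τ₂)
        = (ang cd v βg ξg ν τ₁ * ang cd v βg ξg ν (nz (wt w))) • (K' τ₁ * wordProd F w * J' τ₂))
    (hcJ : ∀ (ν τ₁ τ₂ : I →₀ ℤ) (w : FreeMonoid I),
      cJ ν (K' τ₁ * wordProd F w * J' τ₂)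
        = (extZ ξg τ₁ ν * extZ ξg (nz (wt w)) ν) • (K' τ₁ * wordProd F w * J' τ₂))
    (iS : I → (Am →ₗ[𝔽] Am))
    (hiS0 : ∀ (j : I) (τ₁ τ₂ : I →₀ ℤ), iS j (K' τ₁ * J' τ₂) = 0)
    (hiSF : ∀ j i : I, iS j (F i) = if i = j then ξg i j • (1 : Am) else 0)
    (hiSmul : ∀ (j : I) (x y : Am), iS j (x * y) = iS j x * cJ (δZ j) y + cK (δZ j) x * iS j y)
    (ρ : Ap →ₗ[𝔽] Module.End 𝔽 Am)
    (hρanti : ∀ x y : Ap, ρ (x * y) = ρ y * ρ x) (hρ1 : ρ 1 = 1)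
    (hρE : ∀ j : I, ρ (E j) = (v ^ (-(cd.d j)) - v ^ (cd.d j))⁻¹ • iS j)
    (hρK : ∀ i : I, ρ (K (δZ i)) = cK (δZ i))
    (hρKinv : ∀ i : I, ρ (K (-(δZ i))) = cK (-(δZ i)))
    (hρJ : ∀ i : I, ρ (Jp (δZ i)) = cJ (δZ i))
    (hρJinv : ∀ i : I, ρ (Jp (-(δZ i))) = cJ (-(δZ i)))
    (εm : Am →ₐ[𝔽] 𝔽)
    (hεmF : ∀ i, εm (F i) = 0) (hεmK' : ∀ ν, εm (K' ν) = 1) (hεmJ' : ∀ ν, εm (J' ν) = 1)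
    (εp : Ap →ₐ[𝔽] 𝔽)
    (hεpE : ∀ i, εp (E i) = 0) (hεpK : ∀ ν, εp (K ν) = 1) (hεpJ : ∀ ν, εp (Jp ν) = 1)
    (Δp : Ap →ₐ[𝔽] (Ap ⊗[𝔽] Ap))
    (hΔpE : ∀ i, Δp (E i) = E i ⊗ₜ[𝔽] Jp (δZ i) + K (δZ i) ⊗ₜ[𝔽] E i)
    (hΔpK : ∀ ν, Δp (K ν) = K ν ⊗ₜ[𝔽] K ν) (hΔpJ : ∀ ν, Δp (Jp ν) = Jp ν ⊗ₜ[𝔽] Jp ν)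
    (Δm : Am →ₐ[𝔽] (Am ⊗[𝔽] Am))
    (hΔmF : ∀ i, Δm (F i) = J' (δZ i) ⊗ₜ[𝔽] F i + F i ⊗ₜ[𝔽] K' (δZ i))
    (hΔmK' : ∀ ν, Δm (K' ν) = K' ν ⊗ₜ[𝔽] K' ν) (hΔmJ' : ∀ ν, Δm (J' ν) = J' ν ⊗ₜ[𝔽] J' ν)
    (Sp : Ap →ₗ[𝔽] Ap) (hSp1 : Sp 1 = 1) (hSpanti : ∀ x y, Sp (x * y) = Sp y * Sp x)
    (hSpE : ∀ i, Sp (E i) = -(K (-(δZ i)) * E i * Jp (-(δZ i))))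
    (hSpK : ∀ ν, Sp (K ν) = K (-ν)) (hSpJ : ∀ ν, Sp (Jp ν) = Jp (-ν))
    (Sm : Am ≃ₗ[𝔽] Am) (hSm1 : Sm 1 = 1) (hSmanti : ∀ x y, Sm (x * y) = Sm y * Sm x)
    (hSmF : ∀ i, Sm (F i) = -(J' (-(δZ i)) * F i * K' (-(δZ i))))
    (hSmK' : ∀ ν, Sm (K' ν) = K' (-ν)) (hSmJ' : ∀ ν, Sm (J' ν) = J' (-ν))
    :
    (∀ y : Am, εm (ρ 1 y) = εm y) ∧
    (∀ x : Ap, εm (ρ x 1) = εp x) ∧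
    (∀ (x : Ap) (y' y'' : Am) (n : ℕ) (a b : Fin n → Ap),
      Δp x = ∑ k, a k ⊗ₜ[𝔽] b k →
      εm (ρ x (y' * y'')) = ∑ k, εm (ρ (a k) y') * εm (ρ (b k) y'')) ∧
    (∀ (x' x'' : Ap) (y : Am) (n : ℕ) (a b : Fin n → Am),
      Δm y = ∑ k, a k ⊗ₜ[𝔽] b k →
      εm (ρ (x' * x'') y) = ∑ k, εm (ρ x' (b k)) * εm (ρ x'' (a k))) ∧
    (∀ (x : Ap) (y : Am), εm (ρ (Sp x) y) = εm (ρ x (Sm.symm y))) :=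
  phi_skew_hopf_pairing_general cd v hv βg ξg hββ hξne E K Jp hK0 hKadd hJ0 hJadd bp hbp F K' J'
    hK'0 hK'add hJ'0 hJ'add hK'J' hK'F hJ'F bm hbm cK cJ hcK hcJ iS hiS0 hiSF hiSmul ρ hρanti hρ1
    hρE hρK hρKinv hρJ hρJinv εm hεmF hεmK' hεmJ' εp hεpE hεpK hεpJ Δp hΔpE hΔpK hΔpJ Δm hΔmF hΔmK'
    hΔmJ' Sp hSpanti hSpE hSpK hSpJ Sm hSm1 hSmanti hSmF hSmK' hSmJ'
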